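/- Let 𝒜 be the annihilation operator on functions (V →₀ ℕ) → ℝ and, for a configuration ξ, let h_ξ be the indicator function of ξ (h_ξ(η) = 1 if η = ξ, else 0). Then for every m ∈ ℕ and all configurations ξ, η: (𝒜^m h_ξ)(η) = m! · F(ξ,η) if |η| = |ξ| + m, and (𝒜^m h_ξ)(η) = 0 if |η| ≠ |ξ| + m. Consequently (e^{𝒜} h_ξ)(η) := Σ_{m} (1/m!)·(𝒜^m h_ξ)(η) = F(ξ,η) for all ξ, η (the sum having at most one nonzero term). -/
import Mathlib


/-- The annihilation operator on functions of configurations. -/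
noncomputable def ann {V : Type*} (f : (V →₀ ℕ) → ℝ) : (V →₀ ℕ) → ℝ :=
  fun η => ∑ x ∈ η.support, (η x : ℝ) * f (η - Finsupp.single x 1)

/-- `F ξ η = ∏_{x ∈ supp ξ} C(η x, ξ x)`. -/
def Ffun {V : Type*} (ξ η : V →₀ ℕ) : ℕ := ∏ x ∈ ξ.support, Nat.choose (η x) (ξ x)

open Classical in
/-- The indicator function of the configuration `ξ`. -/
noncomputable def hind {V : Type*} (ξ : V →₀ ℕ) : (V →₀ ℕ) → ℝ :=
  fun η => if η = ξ then 1 else 0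

section Aux
variable {V : Type*}

lemma sub_single_apply_ne (η : V →₀ ℕ) {x y : V} (h : y ≠ x) :
    ((η - Finsupp.single x 1 : V →₀ ℕ)) y = η y := by
  classical
  simp [Finsupp.tsub_apply, Finsupp.single_apply, Ne.symm h]

lemma sub_single_apply_self (η : V →₀ ℕ) (x : V) :
    ((η - Finsupp.single x 1 : V →₀ ℕ)) x = η x - 1 := by
  simp [Finsupp.tsub_apply]

lemma support_sub_single (η : V →₀ ℕ) (x : V) :
    ((η - Finsupp.single x 1 : V →₀ ℕ)).support ⊆ η.support := by
  intro y hy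
  simp only [Finsupp.mem_support_iff] at hy ⊢
  intro h0
  apply hy
  rcases eq_or_ne y x with rfl | hyx
  · simp [Finsupp.tsub_apply, h0]
  · rw [sub_single_apply_ne η hyx]; exact h0

lemma sub_single_apply_le (η : V →₀ ℕ) (x y : V) :
    ((η - Finsupp.single x 1 : V →₀ ℕ)) y ≤ η y := by
  simp only [Finsupp.tsub_apply]; exact Nat.sub_le _ _

lemma sum_sub_single (η : V →₀ ℕ) {x : V} (hx : x ∈ η.support) :
    ∑ y ∈ ((η - Finsupp.single x 1 : V →₀ ℕ)).support, (η - Finsupp.single x 1 : V →₀ ℕ) y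
      = (∑ y ∈ η.support, η y) - 1 := by
  classical
  rw [Finset.sum_subset (support_sub_single η x)
    (by intro y _ hy; exact Finsupp.notMem_support_iff.mp hy)]
  rw [← Finset.add_sum_erase _ _ hx, ← Finset.add_sum_erase _ η hx]
  have h1 : ∑ y ∈ η.support.erase x, (η - Finsupp.single x 1 : V →₀ ℕ) y
      = ∑ y ∈ η.support.erase x, η y := by
    refine Finset.sum_congr rfl fun y hy => ?_
    exact sub_single_apply_ne η (Finset.ne_of_mem_erase hy)
  rw [h1, sub_single_apply_self]
  have hx1 : 1 ≤ η x := Nat.one_le_iff_ne_zero.mpr (Finsupp.mem_support_iff.mp hx)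
  omega

lemma choose_cast_id (n k : ℕ) (hn : 1 ≤ n) :
    (n : ℝ) * (Nat.choose (n - 1) k : ℝ) = ((n : ℝ) - k) * (Nat.choose n k : ℝ) := by
  obtain ⟨s, rfl⟩ := Nat.exists_eq_succ_of_ne_zero (by omega : n ≠ 0)
  rcases le_or_gt k (s + 1) with hk | hk
  · have h := Nat.choose_mul_succ_eq s k
    have h2 : ((s.choose k * (s + 1) : ℕ) : ℝ) = (((s+1).choose k * (s + 1 - k) : ℕ) : ℝ) := by
      rw [h]
    rw [Nat.cast_mul, Nat.cast_mul, Nat.cast_sub hk] at h2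
    simp only [Nat.succ_sub_one]
    push_cast at h2 ⊢
    linarith
  · rw [Nat.choose_eq_zero_of_lt (by omega), Nat.choose_eq_zero_of_lt (by omega)]
    simp

lemma key_sum (ξ η : V →₀ ℕ) :
    ∑ x ∈ η.support, (η x : ℝ) * (Ffun ξ (η - Finsupp.single x 1) : ℝ)
      = (((∑ y ∈ η.support, η y : ℕ) : ℝ) - ((∑ y ∈ ξ.support, ξ y : ℕ) : ℝ)) * (Ffun ξ η : ℝ) := by
  classical
  by_cases hbad : ∃ z ∈ ξ.support, η z < ξ z
  · obtain ⟨z, hz, hzlt⟩ := hbad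
    have hF : Ffun ξ η = 0 :=
      Finset.prod_eq_zero hz (Nat.choose_eq_zero_of_lt hzlt)
    have hFx : ∀ x ∈ η.support, Ffun ξ (η - Finsupp.single x 1) = 0 := fun x _ =>
      Finset.prod_eq_zero hz
        (Nat.choose_eq_zero_of_lt (lt_of_le_of_lt (sub_single_apply_le η x z) hzlt))
    rw [hF]
    rw [Finset.sum_congr rfl (fun x hx => by rw [hFx x hx, Nat.cast_zero, mul_zero])]
    simp
  · push_neg at hbad
    have hss : ξ.support ⊆ η.support := by
      intro z hz
      have := hbad z hz
      have h1 := Finsupp.mem_support_iff.mp hz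
      exact Finsupp.mem_support_iff.mpr (by omega)
    rw [← Finset.sum_sdiff hss]
    have hA : ∀ x ∈ η.support \ ξ.support,
        (η x : ℝ) * (Ffun ξ (η - Finsupp.single x 1) : ℝ) = (η x : ℝ) * (Ffun ξ η : ℝ) := by
      intro x hx
      have hxn : x ∉ ξ.support := (Finset.mem_sdiff.mp hx).2
      congr 2
      refine Finset.prod_congr rfl fun y hy => ?_
      rw [sub_single_apply_ne η (by rintro rfl; exact hxn hy)]
    have hB : ∀ x ∈ ξ.support,
        (η x : ℝ) * (Ffun ξ (η - Finsupp.single x 1) : ℝ)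
          = ((η x : ℝ) - (ξ x : ℝ)) * (Ffun ξ η : ℝ) := by
      intro x hx
      have hx1 : 1 ≤ η x :=
        Nat.one_le_iff_ne_zero.mpr (Finsupp.mem_support_iff.mp (hss hx))
      have hprodN : Ffun ξ (η - Finsupp.single x 1)
          = Nat.choose (η x - 1) (ξ x)
            * ∏ y ∈ ξ.support.erase x, Nat.choose (η y) (ξ y) := by
        unfold Ffun
        rw [← Finset.mul_prod_erase _ _ hx, sub_single_apply_self]
        congr 1
        refine Finset.prod_congr rfl fun y hy => ?_
        rw [sub_single_apply_ne η (Finset.ne_of_mem_erase hy)]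
      have hprod2N : Ffun ξ η
          = Nat.choose (η x) (ξ x)
            * ∏ y ∈ ξ.support.erase x, Nat.choose (η y) (ξ y) := by
        unfold Ffun
        rw [← Finset.mul_prod_erase _ _ hx]
      rw [hprodN, hprod2N]
      push_cast
      rw [← mul_assoc, choose_cast_id _ _ hx1]
      ring
    rw [Finset.sum_congr rfl hA, Finset.sum_congr rfl hB]
    rw [← Finset.sum_mul, ← Finset.sum_mul, ← add_mul]
    congr 1
    have hsplit : ((∑ y ∈ η.support, η y : ℕ) : ℝ)
        = (∑ x ∈ η.support \ ξ.support, (η x : ℝ)) + ∑ x ∈ ξ.support, (η x : ℝ) := by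
      rw [← Finset.sum_sdiff hss]
      push_cast
      ring
    rw [Finset.sum_sub_distrib, hsplit]
    push_cast
    ring

lemma eq_of_le_of_sum_eq {ξ η : V →₀ ℕ} (hle : ∀ x, ξ x ≤ η x)
    (hsum : (∑ x ∈ η.support, η x) = ∑ x ∈ ξ.support, ξ x) : η = ξ := by
  classical
  have hss : ξ.support ⊆ η.support := by
    intro z hz
    have h1 := Finsupp.mem_support_iff.mp hz
    have := hle z
    exact Finsupp.mem_support_iff.mpr (by omega)
  have hsum2 : (∑ x ∈ η.support, ξ x) = ∑ x ∈ ξ.support, ξ x := by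
    rw [Finset.sum_subset hss (fun x _ hx => Finsupp.notMem_support_iff.mp hx)]
  have hkey : ∀ x ∈ η.support, ξ x = η x := by
    rw [← Finset.sum_eq_sum_iff_of_le (fun i _ => hle i)]
    omega
  ext x
  by_cases hx : x ∈ η.support
  · exact (hkey x hx).symm
  · have h1 := Finsupp.notMem_support_iff.mp hx
    have := hle x
    omega

lemma Ffun_self (ξ : V →₀ ℕ) : Ffun ξ ξ = 1 := by
  unfold Ffun
  exact Finset.prod_eq_one fun x _ => Nat.choose_self _

lemma main_lemma {V : Type*} (ξ : V →₀ ℕ) (m : ℕ) (η : V →₀ ℕ) :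
    (ann^[m]) (hind ξ) η =
      if (∑ x ∈ η.support, η x) = (∑ x ∈ ξ.support, ξ x) + m then
        (Nat.factorial m : ℝ) * (Ffun ξ η : ℝ) else 0 := by
  classical
  induction m generalizing η with
  | zero =>
    simp only [Function.iterate_zero, id_eq, hind, Nat.factorial_zero, Nat.cast_one, one_mul,
      Nat.add_zero]
    by_cases h : η = ξ
    · subst h
      rw [if_pos rfl, if_pos rfl, Ffun_self, Nat.cast_one]
    · rw [if_neg h]
      by_cases hs : (∑ x ∈ η.support, η x) = ∑ x ∈ ξ.support, ξ x
      · rw [if_pos hs]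
        by_cases hle : ∀ x, ξ x ≤ η x
        · exact absurd (eq_of_le_of_sum_eq hle hs) h
        · push_neg at hle
          obtain ⟨z, hz⟩ := hle
          have hzs : z ∈ ξ.support := Finsupp.mem_support_iff.mpr (by omega)
          rw [show Ffun ξ η = 0 from
            Finset.prod_eq_zero hzs (Nat.choose_eq_zero_of_lt (by omega))]
          simp
      · rw [if_neg hs]
  | succ m ih =>
    rw [Function.iterate_succ_apply']
    show ∑ x ∈ η.support, (η x : ℝ) * (ann^[m]) (hind ξ) (η - Finsupp.single x 1) = _
    have hterm : ∀ x ∈ η.support,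
        (η x : ℝ) * (ann^[m]) (hind ξ) (η - Finsupp.single x 1)
          = (η x : ℝ) *
            (if (∑ y ∈ η.support, η y) - 1 = (∑ y ∈ ξ.support, ξ y) + m then
              (Nat.factorial m : ℝ) * (Ffun ξ (η - Finsupp.single x 1) : ℝ) else 0) := by
      intro x hx
      rw [ih, sum_sub_single η hx]
    rw [Finset.sum_congr rfl hterm]
    by_cases hs : (∑ x ∈ η.support, η x) = (∑ x ∈ ξ.support, ξ x) + (m + 1)
    · rw [if_pos hs]
      have hc : (∑ y ∈ η.support, η y) - 1 = (∑ y ∈ ξ.support, ξ y) + m := by omega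
      rw [Finset.sum_congr rfl (fun x _ => by rw [if_pos hc])]
      have : ∑ x ∈ η.support, (η x : ℝ) *
          ((Nat.factorial m : ℝ) * (Ffun ξ (η - Finsupp.single x 1) : ℝ))
          = (Nat.factorial m : ℝ) *
            ∑ x ∈ η.support, (η x : ℝ) * (Ffun ξ (η - Finsupp.single x 1) : ℝ) := by
        rw [Finset.mul_sum]
        exact Finset.sum_congr rfl fun x _ => by ring
      rw [this, key_sum]
      have hcast : (((∑ y ∈ η.support, η y : ℕ) : ℝ) - ((∑ y ∈ ξ.support, ξ y : ℕ) : ℝ))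
          = ((m : ℝ) + 1) := by
        rw [hs]
        push_cast
        ring
      rw [hcast, Nat.factorial_succ]
      push_cast
      ring
    · rw [if_neg hs]
      refine Finset.sum_eq_zero fun x hx => ?_
      have hηx : 1 ≤ η x := Nat.one_le_iff_ne_zero.mpr (Finsupp.mem_support_iff.mp hx)
      have hge : 1 ≤ ∑ y ∈ η.support, η y :=
        le_trans hηx (Finset.single_le_sum (fun i _ => Nat.zero_le _) hx)
      rw [if_neg (by omega), mul_zero]

end Aux

/-- **`e^𝒜` turns indicators into factorial moments** (Lemma 4.1):
`(𝒜^m h_ξ)(η) = m! F(ξ,η)` if `|η| = |ξ| + m` and `0` otherwise; consequently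
`(e^𝒜 h_ξ)(η) = ∑_m (1/m!) (𝒜^m h_ξ)(η) = F(ξ,η)`. -/
theorem stmt16 {V : Type*} (ξ : V →₀ ℕ) :
    (∀ m : ℕ, ∀ η : V →₀ ℕ,
      ((∑ x ∈ η.support, η x) = (∑ x ∈ ξ.support, ξ x) + m →
          (ann^[m]) (hind ξ) η = (Nat.factorial m : ℝ) * (Ffun ξ η : ℝ)) ∧
      ((∑ x ∈ η.support, η x) ≠ (∑ x ∈ ξ.support, ξ x) + m →
          (ann^[m]) (hind ξ) η = 0)) ∧
      (∀ η : V →₀ ℕ,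
        ∑' m : ℕ, (1 / (Nat.factorial m : ℝ)) * (ann^[m]) (hind ξ) η = (Ffun ξ η : ℝ)) := by
  constructor
  · intro m η
    constructor
    · intro h
      rw [main_lemma ξ m η, if_pos h]
    · intro h
      rw [main_lemma ξ m η, if_neg h]
  · intro η
    by_cases hle : (∑ x ∈ ξ.support, ξ x) ≤ ∑ x ∈ η.support, η x
    · obtain ⟨m0, hm0⟩ := Nat.le.dest hle
      rw [tsum_eq_single m0 (fun m hm => by
        rw [main_lemma ξ m η, if_neg (by omega), mul_zero])]
      rw [main_lemma ξ m0 η, if_pos hm0.symm]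
      rw [← mul_assoc, one_div_mul_cancel (by positivity : (Nat.factorial m0 : ℝ) ≠ 0), one_mul]
    · push_neg at hle
      have hF : Ffun ξ η = 0 := by
        by_cases hl : ∀ x, ξ x ≤ η x
        · exfalso
          have hss : ξ.support ⊆ η.support := by
            intro z hz
            have h1 := Finsupp.mem_support_iff.mp hz
            have := hl z
            exact Finsupp.mem_support_iff.mpr (by omega)
          have h1 : (∑ x ∈ ξ.support, ξ x) ≤ ∑ x ∈ ξ.support, η x :=
            Finset.sum_le_sum fun i _ => hl i
          have h2 : (∑ x ∈ ξ.support, η x) ≤ ∑ x ∈ η.support, η x :=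
            Finset.sum_le_sum_of_subset hss
          omega
        · push_neg at hl
          obtain ⟨z, hz⟩ := hl
          have hzs : z ∈ ξ.support := Finsupp.mem_support_iff.mpr (by omega)
          exact Finset.prod_eq_zero hzs (Nat.choose_eq_zero_of_lt (by omega))
      rw [hF, Nat.cast_zero]
      have : ∀ m : ℕ, (1 / (Nat.factorial m : ℝ)) * (ann^[m]) (hind ξ) η = 0 := by
        intro m
        rw [main_lemma ξ m η, if_neg (by omega), mul_zero]
      simp only [this, tsum_zero]
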